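/- Let p = (p_1, …, p_n) be a probability distribution with maximum component p_M and minimum component p_m, and suppose p has more than one nonzero component. Then the limit of D_α(p)/D_α* as α → ∞ equals (ln(4 n p_M) − ln((n p_M + 1)(n p_m + 1)))/(ln(4n) − ln(n + 1)). -/

import Mathlib

open Real Filter Topology

/-- Normalized Rényi entropy of a distribution `p` on `Fin n`. -/
noncomputable def renyiH (n : ℕ) (p : Fin n → ℝ) (α : ℝ) : ℝ :=
  (1 / ((1 - α) * Real.log n)) * Real.log (∑ i, p i ^ α)

/-- Jensen–Rényi divergence of `p` from the uniform distribution on `Fin n`. -/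
noncomputable def renyiD (n : ℕ) (p : Fin n → ℝ) (α : ℝ) : ℝ :=
  (1 / (2 * (α - 1))) *
    (Real.log (∑ i, p i ^ α * ((p i + 1 / (n : ℝ)) / 2) ^ (1 - α)) +
     Real.log (∑ i, (n : ℝ) ^ (-α) * ((p i + 1 / (n : ℝ)) / 2) ^ (1 - α)))

/-- Normalization constant `D_α^*`. -/
noncomputable def renyiDstar (n : ℕ) (α : ℝ) : ℝ :=
  (1 / (2 * (α - 1))) *
    Real.log (((((n : ℝ) + 1) ^ (1 - α) + (n : ℝ) - 1) / (n : ℝ)) *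
      (((n : ℝ) + 1) / (4 * (n : ℝ))) ^ (1 - α))

/-- Rényi statistical complexity. -/
noncomputable def renyiC (n : ℕ) (p : Fin n → ℝ) (α : ℝ) : ℝ :=
  renyiD n p α * renyiH n p α / renyiDstar n α

/-!
With `c i = (p i + 1/n)/2`, both sums inside `renyiD` have the form `∑ c i * r i ^ α`, with
`r i = p i / c i` and `r i = (1/n) / c i` respectively. Such a sum lies between
`c i₀ * R ^ α` and `(∑ c) * R ^ α` for `R = r i₀ = max r`, so its logarithm is `α log R + O(1)`.
The two maxima are `2 n p_M / (n p_M + 1)` and `2 / (n p_m + 1)`, which gives the numerator;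
the denominator comes from `renyiDstar`, where `(n + 1) ^ (1 - α) → 0`.
-/

open Finset

lemma tendsto_inv_mul_log_of_rpow_bounds {S : ℝ → ℝ} {a b R : ℝ} (ha : 0 < a) (hb : 0 < b)
    (hR : 0 < R) (hlow : ∀ᶠ α in atTop, a * R ^ α ≤ S α)
    (hup : ∀ᶠ α in atTop, S α ≤ b * R ^ α) :
    Tendsto (fun α => α⁻¹ * Real.log (S α)) atTop (𝓝 (Real.log R)) := by
  have hlog_bound : ∀ {k : ℝ}, 0 < k → ∀ α : ℝ, 0 < α →
      α⁻¹ * Real.log (k * R ^ α) = α⁻¹ * Real.log k + Real.log R := by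
    intro k hk α hα
    rw [Real.log_mul hk.ne' (Real.rpow_pos_of_pos hR α).ne', Real.log_rpow hR]
    field_simp
  have hlim : ∀ k : ℝ, Tendsto (fun α : ℝ => α⁻¹ * Real.log k + Real.log R) atTop
      (𝓝 (Real.log R)) := fun k => by
    simpa using (tendsto_inv_atTop_zero.mul_const (Real.log k)).add_const (Real.log R)
  refine tendsto_of_tendsto_of_tendsto_of_le_of_le' (hlim a) (hlim b) ?_ ?_
  · filter_upwards [hlow, eventually_gt_atTop 0] with α hα hαpos
    rw [← hlog_bound ha α hαpos]
    exact mul_le_mul_of_nonneg_left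
      (Real.log_le_log (by positivity) hα) (inv_nonneg.mpr hαpos.le)
  · filter_upwards [hlow, hup, eventually_gt_atTop 0] with α hαl hαu hαpos
    rw [← hlog_bound hb α hαpos]
    exact mul_le_mul_of_nonneg_left
      (Real.log_le_log (lt_of_lt_of_le (by positivity) hαl) hαu) (inv_nonneg.mpr hαpos.le)

lemma tendsto_inv_mul_log_sum_mul_rpow {ι : Type*} [Fintype ι] {c r : ι → ℝ}
    (hc : ∀ i, 0 < c i) (hr : ∀ i, 0 ≤ r i) {i₀ : ι} (hr₀ : 0 < r i₀) (hle : ∀ i, r i ≤ r i₀) :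
    Tendsto (fun α => α⁻¹ * Real.log (∑ i, c i * r i ^ α)) atTop (𝓝 (Real.log (r i₀))) := by
  refine tendsto_inv_mul_log_of_rpow_bounds (hc i₀) (sum_pos (fun i _ => hc i) ⟨i₀, mem_univ _⟩)
    hr₀ (Eventually.of_forall fun α => ?_) (eventually_ge_atTop 0 |>.mono fun α hα => ?_)
  · exact single_le_sum (f := fun i => c i * r i ^ α)
      (fun i _ => mul_nonneg (hc i).le (Real.rpow_nonneg (hr i) α)) (mem_univ i₀)
  · rw [sum_mul]
    exact sum_le_sum fun i _ =>
      mul_le_mul_of_nonneg_left (Real.rpow_le_rpow (hr i) (hle i) hα) (hc i).le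

lemma rpow_mul_rpow_one_sub {x c : ℝ} (hx : 0 ≤ x) (hc : 0 < c) (α : ℝ) :
    x ^ α * c ^ (1 - α) = c * (x / c) ^ α := by
  rw [Real.rpow_sub hc, Real.rpow_one, Real.div_rpow hx hc.le]
  field_simp

lemma tendsto_div_two_mul_sub_one :
    Tendsto (fun α : ℝ => α / (2 * (α - 1))) atTop (𝓝 (1 / 2)) := by
  have h : Tendsto (fun α : ℝ => 1 / (2 - 2 * α⁻¹)) atTop (𝓝 (1 / (2 - 2 * 0))) :=
    tendsto_const_nhds.div (tendsto_const_nhds.sub (tendsto_inv_atTop_zero.const_mul 2))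
      (by norm_num)
  rw [show (1 : ℝ) / (2 - 2 * 0) = 1 / 2 by norm_num] at h
  refine h.congr' ?_
  filter_upwards [eventually_gt_atTop 1] with α hα
  have : α - 1 ≠ 0 := sub_ne_zero.mpr hα.ne'
  field_simp

lemma tendsto_renyiD_atTop {n : ℕ} (hn : 0 < n) {p : Fin n → ℝ} (hp : ∀ i, 0 ≤ p i)
    {iM im : Fin n} (hM : ∀ i, p i ≤ p iM) (hm : ∀ i, p im ≤ p i) (hpM : 0 < p iM) :
    Tendsto (renyiD n p) atTop
      (𝓝 ((Real.log (4 * n * p iM) - Real.log ((n * p iM + 1) * (n * p im + 1))) / 2)) := by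
  set N : ℝ := (n : ℝ)
  have hN : 0 < N := Nat.cast_pos.mpr hn
  set c : Fin n → ℝ := fun i => (p i + 1 / N) / 2
  have hc : ∀ i, 0 < c i := fun i => by have := hp i; positivity
  have hS₁ : ∀ α : ℝ, ∑ i, p i ^ α * c i ^ (1 - α) = ∑ i, c i * (p i / c i) ^ α := fun α =>
    sum_congr rfl fun i _ => rpow_mul_rpow_one_sub (hp i) (hc i) α
  have hS₂ : ∀ α : ℝ, ∑ i, N ^ (-α) * c i ^ (1 - α) = ∑ i, c i * ((1 / N) / c i) ^ α :=
    fun α => sum_congr rfl fun i _ => by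
      rw [Real.rpow_neg hN.le, ← Real.inv_rpow hN.le, ← one_div,
        rpow_mul_rpow_one_sub (by positivity) (hc i) α]
  -- `p / (p + 1/N)` increases and `(1/N) / (p + 1/N)` decreases in `p`.
  have hT₁ := tendsto_inv_mul_log_sum_mul_rpow hc (fun i => div_nonneg (hp i) (hc i).le)
    (div_pos hpM (hc iM)) fun i => by
      rw [div_le_div_iff₀ (hc i) (hc iM)]
      simp only [c]
      nlinarith [mul_le_mul_of_nonneg_right (hM i) (one_div_pos.mpr hN).le]
  have hT₂ := tendsto_inv_mul_log_sum_mul_rpow hc (fun i => by have := hc i; positivity)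
    (div_pos (one_div_pos.mpr hN) (hc im)) fun i =>
      div_le_div_of_nonneg_left (one_div_pos.mpr hN).le (hc im)
        (by simp only [c]; linarith [hm i])
  have hlim : 1 / 2 * (Real.log (p iM / c iM) + Real.log ((1 / N) / c im))
      = (Real.log (4 * N * p iM) - Real.log ((N * p iM + 1) * (N * p im + 1))) / 2 := by
    have hpm := hp im
    rw [← Real.log_mul (div_pos hpM (hc iM)).ne' (by have := hc im; positivity),
      ← Real.log_div (by positivity) (by positivity), mul_comm, ← div_eq_mul_one_div]
    congr 2
    simp only [c]
    field_simp
    ring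
  rw [← hlim]
  refine (tendsto_div_two_mul_sub_one.mul (hT₁.add hT₂)).congr' ?_
  filter_upwards [eventually_gt_atTop 1] with α hα
  have : α - 1 ≠ 0 := sub_ne_zero.mpr hα.ne'
  have : α ≠ 0 := by positivity
  change _ = 1 / (2 * (α - 1)) *
    (Real.log (∑ i, p i ^ α * c i ^ (1 - α)) + Real.log (∑ i, N ^ (-α) * c i ^ (1 - α)))
  rw [hS₁, hS₂]
  generalize Real.log _ = L₁
  generalize Real.log _ = L₂
  field_simp

lemma tendsto_renyiDstar_atTop {n : ℕ} (hn : 1 < n) :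
    Tendsto (renyiDstar n) atTop (𝓝 ((Real.log (4 * n) - Real.log (n + 1)) / 2)) := by
  have hN : 1 < (n : ℝ) := Nat.one_lt_cast.mpr hn
  unfold renyiDstar
  generalize (n : ℝ) = N at hN ⊢
  have hpow : Tendsto (fun α : ℝ => (N + 1) ^ (1 - α)) atTop (𝓝 0) :=
    (tendsto_rpow_atBot_of_base_gt_one _ (by linarith)).comp <|
      (tendsto_atBot_add_const_left _ 1 tendsto_neg_atTop_atBot).congr fun α => by
        simp [sub_eq_add_neg]
  have hlogA : Tendsto (fun α : ℝ => Real.log (((N + 1) ^ (1 - α) + N - 1) / N)) atTop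
      (𝓝 (Real.log ((N - 1) / N))) := by
    have := ((hpow.add_const (N - 1)).div_const N).log
      (by rw [zero_add]; exact (div_pos (by linarith) (by linarith)).ne')
    rw [zero_add] at this
    exact this.congr fun α => by rw [add_sub_assoc]
  have hinv : Tendsto (fun α : ℝ => 1 / (2 * (α - 1))) atTop (𝓝 0) := by
    have : Tendsto (fun α : ℝ => 2 * (α - 1)) atTop atTop :=
      (tendsto_atTop_add_const_right _ (-1) tendsto_id).const_mul_atTop two_pos
    simpa only [one_div, Pi.inv_def] using this.inv_tendsto_atTop
  have hlim : 0 * Real.log ((N - 1) / N) - 1 / 2 * Real.log ((N + 1) / (4 * N))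
      = (Real.log (4 * N) - Real.log (N + 1)) / 2 := by
    rw [Real.log_div (x := N + 1) (by linarith) (by linarith)]
    ring
  rw [← hlim]
  refine ((hinv.mul hlogA).sub_const _).congr' ?_
  filter_upwards [eventually_gt_atTop 1] with α hα
  have : α - 1 ≠ 0 := sub_ne_zero.mpr hα.ne'
  have hA : 0 < ((N + 1) ^ (1 - α) + N - 1) / N := by
    have := Real.rpow_pos_of_pos (by linarith : (0 : ℝ) < N + 1) (1 - α)
    exact div_pos (by linarith) (by linarith)
  rw [Real.log_mul hA.ne' (by positivity), Real.log_rpow (div_pos (by linarith) (by linarith))]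
  field_simp
  ring

theorem renyi_ratio_limit_infty_general (n : ℕ) (hn : 2 ≤ n) (p : Fin n → ℝ)
    (hp : ∀ i, 0 ≤ p i) (hsum : ∑ i, p i = 1)
    (pM pm : ℝ) (hpM_mem : ∃ i, p i = pM) (hpM_ub : ∀ i, p i ≤ pM)
    (hpm_mem : ∃ i, p i = pm) (hpm_lb : ∀ i, pm ≤ p i) :
    Filter.Tendsto (fun α => renyiD n p α / renyiDstar n α) Filter.atTop
      (nhds ((Real.log (4 * (n : ℝ) * pM) -
          Real.log (((n : ℝ) * pM + 1) * ((n : ℝ) * pm + 1))) /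
        (Real.log (4 * (n : ℝ)) - Real.log ((n : ℝ) + 1)))) := by
  obtain ⟨iM, rfl⟩ := hpM_mem
  obtain ⟨im, rfl⟩ := hpm_mem
  have hpM : 0 < p iM := by
    by_contra! h
    have : ∑ i, p i = 0 := sum_eq_zero fun i _ => le_antisymm ((hpM_ub i).trans h) (hp i)
    linarith
  have hDstar : (Real.log (4 * n) - Real.log (n + 1)) / 2 ≠ 0 := by
    have : Real.log ((n : ℝ) + 1) < Real.log (4 * n) :=
      Real.log_lt_log (by positivity) (by linarith [(Nat.ofNat_le_cast.mpr hn : (2 : ℝ) ≤ n)])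
    exact (div_pos (sub_pos.mpr this) two_pos).ne'
  have := (tendsto_renyiD_atTop (by omega) hp hpM_ub hpm_lb hpM).div
    (tendsto_renyiDstar_atTop hn) hDstar
  rwa [div_div_div_cancel_right₀ two_ne_zero] at this

/-- `D_α(p)/D_α^* → (ln(4 n pM) - ln((n pM + 1)(n pm + 1)))/(ln(4n) - ln(n+1))` as `α → ∞`. -/
theorem renyi_ratio_limit_infty (n : ℕ) (hn : 2 ≤ n) (p : Fin n → ℝ)
    (hp : ∀ i, 0 ≤ p i) (hsum : ∑ i, p i = 1)
    (hr : 1 < (Finset.univ.filter fun i => p i ≠ 0).card)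
    (pM pm : ℝ) (hpM_mem : ∃ i, p i = pM) (hpM_ub : ∀ i, p i ≤ pM)
    (hpm_mem : ∃ i, p i = pm) (hpm_lb : ∀ i, pm ≤ p i) :
    Filter.Tendsto (fun α => renyiD n p α / renyiDstar n α) Filter.atTop
      (nhds ((Real.log (4 * (n : ℝ) * pM) -
          Real.log (((n : ℝ) * pM + 1) * ((n : ℝ) * pm + 1))) /
        (Real.log (4 * (n : ℝ)) - Real.log ((n : ℝ) + 1)))) :=
  renyi_ratio_limit_infty_general n hn p hp hsum pM pm hpM_mem hpM_ub hpm_mem hpm_lb
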